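/- arXiv:1912.08017 — 2 statements merged into one kernel-verified Lean document; each statement's English description precedes it below -/
import Mathlib

section
/- If h and k are relatively prime positive integers and x, y are real numbers, then the Dedekind–Rademacher sum satisfies the reciprocity law: s(h,k;x,y) + s(k,h;y,x) = -¼·1_ℤ(x)·1_ℤ(y) + B̄₁(x)·B̄₁(y) + ½·( (h/k)·B̄₂(y) + (1/(hk))·B̄₂(kx+hy) + (k/h)·B̄₂(x) ). -/
open scoped BigOperators
attribute [local instance] Classical.propDecidable

/-- Periodized first Bernoulli polynomial: `x - ⌊x⌋ - 1/2` off the integers, `0` on ℤ. -/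
noncomputable def B1bar (x : ℝ) : ℝ := if ∃ n : ℤ, x = n then 0 else Int.fract x - 1/2

/-- Periodized second Bernoulli polynomial. -/
noncomputable def B2bar (x : ℝ) : ℝ := (Int.fract x)^2 - Int.fract x + 1/6

/-- Indicator function of the integers. -/
noncomputable def indZ (x : ℝ) : ℝ := if ∃ n : ℤ, x = n then 1 else 0

/-- The Dedekind–Rademacher sum `s(h,k;x,y)`. -/
noncomputable def sDR (h : ℤ) (k : ℕ) (x y : ℝ) : ℝ :=
  ∑ r ∈ Finset.range k, B1bar ((h : ℝ) * (((r : ℝ) + y) / k) + x) * B1bar (((r : ℝ) + y) / k)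

/-!
Write `U μ = (μ + y) / k` and `V ν = (ν + x) / h`. The distribution relation
`∑_{ν < h} B̄₁((ν + z) / h) = B̄₁(z)` splits `B̄₁(h U μ + x)` into `∑_ν B̄₁(U μ + V ν)`, so both
sums become double sums over `μ < k`, `ν < h`, and together they sum
`B̄₁(U + V) (B̄₁(U) + B̄₁(V))`. On fractional parts one checks the pointwise identity
`B̄₁(u + v) (B̄₁(u) + B̄₁(v)) = B̄₁(u) B̄₁(v) + (B̄₂(u) + B̄₂(v) + B̄₂(u + v)) / 2 - 1_ℤ(u) 1_ℤ(v) / 4`,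
and every term on the right sums in closed form by the distribution relations for `B̄₁`, `B̄₂`
and `1_ℤ`. For `B̄₂(U μ + V ν)` this needs, after summing over `ν`, that `μ ↦ h μ mod k` permutes
the residues mod `k`, which is where coprimality enters.
-/

open Finset Function

lemma indZ_eq_ite_fract (x : ℝ) : indZ x = if Int.fract x = 0 then 1 else 0 := by
  simp only [indZ, Int.fract_eq_zero_iff, Set.mem_range, eq_comm]

lemma B1bar_eq_fract_add_indZ (x : ℝ) : B1bar x = Int.fract x - 1 / 2 + indZ x / 2 := by
  rw [indZ_eq_ite_fract]
  simp only [B1bar, ← Set.mem_range, eq_comm (a := x), ← Int.fract_eq_zero_iff]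
  split_ifs with hx <;> simp [hx]

lemma periodic_B2bar : Periodic B2bar 1 := fun x => by
  simp only [B2bar, Int.fract_add_one]

lemma Function.Periodic.map_fract {α β : Type*} [Ring α] [LinearOrder α] [IsStrictOrderedRing α]
    [FloorRing α] {f : α → β} (hf : Periodic f 1) (z : α) : f (Int.fract z) = f z := by
  simpa using hf.sub_int_mul_eq ⌊z⌋ (x := z)

lemma sum_range_natCast (m : ℕ) : ∑ r ∈ range m, (r : ℝ) = m * (m - 1) / 2 := by
  induction m with
  | zero => simp
  | succ n ih => rw [sum_range_succ, ih]; push_cast; ring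

lemma sum_range_natCast_sq (m : ℕ) :
    ∑ r ∈ range m, (r : ℝ) ^ 2 = m * (m - 1) * (2 * m - 1) / 6 := by
  induction m with
  | zero => simp
  | succ n ih => rw [sum_range_succ, ih]; push_cast; ring

section Distribution

variable {m : ℕ}

lemma Function.Periodic.sum_range_add_div {M : Type*} [AddCommGroup M] {f : ℝ → M}
    (hf : Periodic f 1) (hm : 0 < m) :
    Periodic (fun z => ∑ r ∈ range m, f ((r + z) / m)) 1 := fun z => by
  have hlast : f ((m + z) / m) = f ((0 + z) / m) := by
    rw [add_div, div_self (by positivity), add_comm, zero_add, hf]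
  have hshift := sum_range_succ (fun r : ℕ => f ((r + z) / m)) m
  rw [sum_range_succ', hlast, Nat.cast_zero, add_left_inj] at hshift
  simpa only [Nat.cast_succ, add_assoc, add_comm (1 : ℝ)] using hshift

lemma fract_natCast_add_div {a : ℝ} (ha₀ : 0 ≤ a) (ha₁ : a < 1) {r : ℕ} (hr : r < m) :
    Int.fract ((r + a) / m) = (r + a) / m := by
  have hr' : (r : ℝ) + 1 ≤ m := by exact_mod_cast hr
  rw [Int.fract_eq_self]
  exact ⟨by positivity, (div_lt_one (by linarith)).2 (by linarith)⟩

lemma sum_comp_fract_add_div {M : Type*} [AddCommGroup M] (hm : 0 < m) (g : ℝ → M) (z : ℝ) :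
    ∑ r ∈ range m, g (Int.fract ((r + z) / m)) = ∑ r ∈ range m, g ((r + Int.fract z) / m) := by
  have hfract := (((Int.fract_periodic ℝ).comp g).sum_range_add_div hm).map_fract z
  simp only [comp_apply] at hfract
  rw [← hfract]
  refine sum_congr rfl fun r hr => ?_
  rw [fract_natCast_add_div (Int.fract_nonneg z) (Int.fract_lt_one z) (mem_range.1 hr)]

lemma sum_fract_add_div (hm : 0 < m) (z : ℝ) :
    ∑ r ∈ range m, Int.fract ((r + z) / m) = Int.fract z + (m - 1) / 2 := by
  rw [sum_comp_fract_add_div hm (fun t => t) z, ← sum_div, sum_add_distrib, sum_range_natCast,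
    sum_const, card_range, nsmul_eq_mul]
  field_simp
  ring

lemma sum_indZ_add_div (hm : 0 < m) (z : ℝ) :
    ∑ r ∈ range m, indZ ((r + z) / m) = indZ z := by
  simp only [indZ_eq_ite_fract]
  rw [sum_comp_fract_add_div hm (fun t => if t = 0 then (1 : ℝ) else 0),
    sum_eq_single_of_mem 0 (mem_range.2 hm)]
  · simp [hm.ne']
  · intro r _ hr
    have hpos : (0 : ℝ) < (r + Int.fract z) / m := by
      have : (0 : ℝ) < r := by exact_mod_cast Nat.pos_of_ne_zero hr
      have := Int.fract_nonneg z
      positivity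
    simp [hpos.ne']

lemma sum_B1bar_add_div (hm : 0 < m) (z : ℝ) :
    ∑ r ∈ range m, B1bar ((r + z) / m) = B1bar z := by
  simp only [B1bar_eq_fract_add_indZ, sum_add_distrib, sum_sub_distrib, ← sum_div,
    sum_fract_add_div hm, sum_indZ_add_div hm, sum_const, card_range, nsmul_eq_mul]
  ring

lemma sum_B2bar_add_div (hm : 0 < m) (z : ℝ) :
    ∑ r ∈ range m, B2bar ((r + z) / m) = B2bar z / m := by
  simp only [B2bar]
  rw [sum_comp_fract_add_div hm (fun t => t ^ 2 - t + 1 / 6)]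
  simp only [div_pow, add_sq, sum_add_distrib, sum_sub_distrib, ← sum_div, ← mul_sum, ← sum_mul,
    sum_range_natCast, sum_range_natCast_sq, sum_const, card_range, nsmul_eq_mul]
  field_simp
  ring

end Distribution

lemma B1bar_add_mul_add (u v : ℝ) :
    B1bar (u + v) * (B1bar u + B1bar v) =
      B1bar u * B1bar v + (B2bar u + B2bar v + B2bar (u + v)) / 2 - indZ u * indZ v / 4 := by
  obtain ⟨n, hn⟩ := Int.fract_add u v
  have hn_cases : n = 0 ∨ n = -1 := by
    have h₁ : (n : ℝ) ≤ 0 := by linarith [Int.fract_add_le u v]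
    have h₂ : (-1 : ℝ) ≤ n := by linarith [Int.fract_add_fract_le u v]
    norm_cast at h₁ h₂
    omega
  have hw := Int.fract_nonneg (u + v)
  have ha := Int.fract_nonneg u
  have hb := Int.fract_nonneg v
  have ha' := Int.fract_lt_one u
  have hb' := Int.fract_lt_one v
  simp only [B1bar_eq_fract_add_indZ, indZ_eq_ite_fract, B2bar]
  rw [show Int.fract (u + v) = Int.fract u + Int.fract v + n by linarith] at hw ⊢
  generalize Int.fract u = a at *
  generalize Int.fract v = b at *
  -- each case is a polynomial identity in `a` and `b`, or contradicts `0 ≤ a, b < 1`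
  rcases hn_cases with rfl | rfl <;> push_cast <;> split_ifs <;> grind

lemma Function.Periodic.sum_range_mul_add_div {M : Type*} [AddCommMonoid M] {f : ℝ → M}
    (hf : Periodic f 1) {h k : ℕ} (hk : 0 < k) (hco : Nat.Coprime h k) (z : ℝ) :
    ∑ μ ∈ range k, f ((h * μ + z) / k) = ∑ μ ∈ range k, f ((μ + z) / k) := by
  have hmaps : ∀ μ ∈ range k, h * μ % k ∈ range k := fun μ _ => mem_range.2 (Nat.mod_lt _ hk)
  have hinj : Set.InjOn (fun μ => h * μ % k) (range k) := fun μ₁ hμ₁ μ₂ hμ₂ hμ =>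
    (Nat.ModEq.cancel_left_of_coprime hco.symm.gcd_eq_one hμ).eq_of_lt_of_lt
      (mem_range.1 hμ₁) (mem_range.1 hμ₂)
  refine sum_nbij (fun μ => h * μ % k) hmaps hinj
    (surjOn_of_injOn_of_card_le _ hmaps hinj le_rfl) fun μ _ => ?_
  have hdiv : ((h * μ : ℕ) : ℝ) = (h * μ % k : ℕ) + k * (h * μ / k : ℕ) := by
    exact_mod_cast (Nat.mod_add_div (h * μ) k).symm
  calc f ((h * μ + z) / k) = f (((h * μ % k : ℕ) + z) / k + (h * μ / k : ℕ) * 1) := by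
        congr 1
        rw [← Nat.cast_mul, hdiv]
        field_simp
        ring
    _ = f (((h * μ % k : ℕ) + z) / k) := hf.nat_mul _ _

lemma sum_sum_B2bar_add {h k : ℕ} (hh : 0 < h) (hk : 0 < k) (hco : Nat.Coprime h k) (x y : ℝ) :
    ∑ μ ∈ range k, ∑ ν ∈ range h, B2bar ((μ + y) / k + (ν + x) / h) =
      B2bar (k * x + h * y) / (h * k) := by
  have hinner : ∀ μ : ℕ, ∑ ν ∈ range h, B2bar ((μ + y) / k + (ν + x) / h) =
      B2bar ((h * μ + (k * x + h * y)) / k) / h := fun μ => by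
    rw [← sum_B2bar_add_div hh]
    refine sum_congr rfl fun ν _ => congrArg B2bar ?_
    field_simp
    ring
  simp_rw [hinner, ← sum_div, periodic_B2bar.sum_range_mul_add_div hk hco, sum_B2bar_add_div hk]
  field_simp

lemma sDR_eq_sum_sum {h : ℕ} (hh : 0 < h) (k : ℕ) (x y : ℝ) :
    sDR h k x y = ∑ μ ∈ range k, ∑ ν ∈ range h,
      B1bar ((μ + y) / k + (ν + x) / h) * B1bar ((μ + y) / k) := by
  refine sum_congr rfl fun μ _ => ?_
  rw [← sum_mul, ← sum_B1bar_add_div hh]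
  congr 1
  refine sum_congr rfl fun ν _ => congrArg B1bar ?_
  push_cast
  field_simp
  ring

/-- Rademacher's reciprocity law for Dedekind–Rademacher sums. -/
theorem dedekind_rademacher_reciprocity (h k : ℕ) (hh : 0 < h) (hk : 0 < k)
    (hco : Nat.Coprime h k) (x y : ℝ) :
    sDR h k x y + sDR k h y x =
      -(1/4) * indZ x * indZ y + B1bar x * B1bar y +
        (1/2) * ((h / k : ℝ) * B2bar y + (1 / ((h : ℝ) * k)) * B2bar (k * x + h * y)
          + (k / h : ℝ) * B2bar x) := by
  set U : ℕ → ℝ := fun μ => (μ + y) / k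
  set V : ℕ → ℝ := fun ν => (ν + x) / h
  have hsplit : sDR h k x y + sDR k h y x =
      ∑ μ ∈ range k, ∑ ν ∈ range h, B1bar (U μ + V ν) * (B1bar (U μ) + B1bar (V ν)) := by
    rw [sDR_eq_sum_sum hh, sDR_eq_sum_sum hk, sum_comm (s := range h)]
    simp only [U, V, add_comm ((_ + x) / _), mul_add, sum_add_distrib]
  have hB1 : ∑ μ ∈ range k, ∑ ν ∈ range h, B1bar (U μ) * B1bar (V ν) = B1bar y * B1bar x := by
    rw [← sum_mul_sum, sum_B1bar_add_div hk, sum_B1bar_add_div hh]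
  have hind : ∑ μ ∈ range k, ∑ ν ∈ range h, indZ (U μ) * indZ (V ν) = indZ y * indZ x := by
    rw [← sum_mul_sum, sum_indZ_add_div hk, sum_indZ_add_div hh]
  have hB2U : ∑ μ ∈ range k, ∑ ν ∈ range h, B2bar (U μ) = h * (B2bar y / k) := by
    simp only [U, sum_const, card_range, nsmul_eq_mul, ← mul_sum, sum_B2bar_add_div hk]
  have hB2V : ∑ μ ∈ range k, ∑ ν ∈ range h, B2bar (V ν) = k * (B2bar x / h) := by
    simp only [V, sum_const, card_range, nsmul_eq_mul, sum_B2bar_add_div hh]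
  have hB2UV : ∑ μ ∈ range k, ∑ ν ∈ range h, B2bar (U μ + V ν) =
      B2bar (k * x + h * y) / (h * k) :=
    sum_sum_B2bar_add hh hk hco x y
  simp only [hsplit, B1bar_add_mul_add, sum_add_distrib, sum_sub_distrib, ← sum_div, hB1, hind,
    hB2U, hB2V, hB2UV]
  field_simp
  ring
end

section
/- If a polytope P ⊆ ℝ^d k-tiles ℝ^d by integer translations, then P is a concrete polytope: A_P(t) = vol(P)·t^d for every positive integer t. -/
open scoped BigOperators
open MeasureTheory
attribute [local instance] Classical.propDecidable

/-- The Euclidean ball of radius `ε` around `c` in `ℝ^d`. -/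
def eball {d : ℕ} (c : Fin d → ℝ) (ε : ℝ) : Set (Fin d → ℝ) :=
  {y | ∑ i, (y i - c i) ^ 2 < ε ^ 2}

/-- `saTendsto Q c ω` says that the solid angle of `Q` at `c` exists and equals `ω`:
the proportion of a small Euclidean ball around `c` occupied by `Q` tends to `ω`. -/
def saTendsto {d : ℕ} (Q : Set (Fin d → ℝ)) (c : Fin d → ℝ) (ω : ℝ) : Prop :=
  Filter.Tendsto
    (fun ε : ℝ => (volume (eball c ε ∩ Q)).toReal / (volume (eball c ε)).toReal)
    (nhdsWithin 0 (Set.Ioi 0)) (nhds ω)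

open Pointwise

open ENNReal

namespace CMAux

variable {d : ℕ}

def cz (l : Fin d → ℤ) : Fin d → ℝ := fun i => (l i : ℝ)

lemma cz_neg (l : Fin d → ℤ) : cz (-l) = -(cz l) := by
  funext i; simp [cz]

lemma eball_isOpen (c : Fin d → ℝ) (ε : ℝ) : IsOpen (eball c ε) := by
  have : eball c ε = (fun y : Fin d → ℝ => ∑ i, (y i - c i) ^ 2) ⁻¹' Set.Iio (ε ^ 2) := rfl
  rw [this]
  exact isOpen_Iio.preimage (by fun_prop)

lemma eball_meas (c : Fin d → ℝ) (ε : ℝ) : MeasurableSet (eball c ε) :=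
  (eball_isOpen c ε).measurableSet

lemma eball_preimage (c : Fin d → ℝ) (ε : ℝ) :
    eball c ε = (fun y => y + (-c)) ⁻¹' eball (0 : Fin d → ℝ) ε := by
  ext y
  simp [eball, sub_eq_add_neg]

lemma volume_eball_eq (c : Fin d → ℝ) (ε : ℝ) :
    volume (eball c ε) = volume (eball (0 : Fin d → ℝ) ε) := by
  rw [eball_preimage c ε]
  exact measure_preimage_add_right volume (-c) _

lemma mem_eball_add (c y : Fin d → ℝ) (ε : ℝ) :
    y + c ∈ eball c ε ↔ y ∈ eball (0 : Fin d → ℝ) ε := by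
  simp [eball]

lemma volume_eball_pos {ε : ℝ} (hε : 0 < ε) (c : Fin d → ℝ) :
    0 < volume (eball c ε) := by
  refine (eball_isOpen c ε).measure_pos volume ⟨c, ?_⟩
  simp [eball]
  positivity

lemma volume_eball_lt_top {ε : ℝ} (hε : 0 < ε) (c : Fin d → ℝ) :
    volume (eball c ε) < ⊤ := by
  have hsub : eball c ε ⊆ Set.univ.pi fun i : Fin d => Set.Ioo (c i - ε) (c i + ε) := by
    intro y hy i _
    have h1 : (y i - c i) ^ 2 < ε ^ 2 := by
      refine lt_of_le_of_lt ?_ hy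
      exact Finset.single_le_sum (f := fun j => (y j - c j) ^ 2)
        (fun j _ => sq_nonneg _) (Finset.mem_univ i)
    constructor <;> nlinarith
  refine lt_of_le_of_lt (measure_mono hsub) ?_
  rw [volume_pi_pi]
  refine ENNReal.prod_lt_top fun i _ => ?_
  simp [Real.volume_Ioo]

section
variable {d : ℕ}

lemma bad_null {P : Set (Fin d → ℝ)} (hconv : Convex ℝ P) :
    volume {x : Fin d → ℝ | ∃ b ∈ frontier P, ∃ l : Fin d → ℤ, x = b + cz l} = 0 := by
  have h0 : volume (frontier P) = 0 := hconv.addHaar_frontier volume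
  have hset : {x : Fin d → ℝ | ∃ b ∈ frontier P, ∃ l : Fin d → ℤ, x = b + cz l}
      = ⋃ l : Fin d → ℤ, (fun y => y + cz l) ⁻¹' frontier P := by
    ext x
    simp only [Set.mem_setOf_eq, Set.mem_iUnion, Set.mem_preimage]
    constructor
    · rintro ⟨b, hb, l, rfl⟩
      exact ⟨-l, by simpa [cz_neg] using hb⟩
    · intro ⟨l, hl⟩
      exact ⟨x + cz l, hl, -l, by simp [cz_neg]⟩
  rw [hset]
  refine measure_iUnion_null fun l => ?_
  rw [measure_preimage_add_right volume (cz l) _]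
  exact h0

lemma tileE {k : ℕ} (hk : 0 < k) {P : Set (Fin d → ℝ)}
    (htile : ∀ x : Fin d → ℝ,
      (¬ ∃ b ∈ frontier P, ∃ l : Fin d → ℤ, x = b + fun i => (l i : ℝ)) →
      ∑' l : Fin d → ℤ, Set.indicator P (fun _ => (1 : ℝ)) (x - fun i => (l i : ℝ)) = k)
    (x : Fin d → ℝ) (hx : ¬ ∃ b ∈ frontier P, ∃ l : Fin d → ℤ, x = b + cz l) :
    ∑' l : Fin d → ℤ, Set.indicator P (1 : (Fin d → ℝ) → ℝ≥0∞) (x - cz l) = k := by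
  have h : ∑' l : Fin d → ℤ, Set.indicator P (fun _ => (1 : ℝ)) (x - cz l) = k := htile x hx
  set f : (Fin d → ℤ) → ℝ := fun l => Set.indicator P (fun _ => (1 : ℝ)) (x - cz l) with hf
  have hnn : ∀ l, 0 ≤ f l := fun l => Set.indicator_nonneg (fun _ _ => zero_le_one) _
  have hsum : Summable f := by
    by_contra hs
    rw [tsum_eq_zero_of_not_summable hs] at h
    exact absurd h.symm (by positivity)
  have h2 := ENNReal.ofReal_tsum_of_nonneg hnn hsum
  rw [h] at h2
  have heq : ∀ l, ENNReal.ofReal (f l) = Set.indicator P (1 : (Fin d → ℝ) → ℝ≥0∞) (x - cz l) := by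
    intro l
    by_cases hl : x - cz l ∈ P <;> simp [hf, Set.indicator_apply, hl]
  rw [tsum_congr heq] at h2
  rw [← h2]
  simp

end

section
variable {d : ℕ}

lemma tileE_smul {k t : ℕ} (hk : 0 < k) (ht : 0 < t) {P : Set (Fin d → ℝ)}
    (htile : ∀ x : Fin d → ℝ,
      (¬ ∃ b ∈ frontier P, ∃ l : Fin d → ℤ, x = b + fun i => (l i : ℝ)) →
      ∑' l : Fin d → ℤ, Set.indicator P (fun _ => (1 : ℝ)) (x - fun i => (l i : ℝ)) = k)
    (hconv : Convex ℝ P) :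
    ∀ᵐ x : Fin d → ℝ,
      ∑' l : Fin d → ℤ, Set.indicator ((t : ℝ) • P) (1 : (Fin d → ℝ) → ℝ≥0∞) (x - cz l)
        = ((k * t ^ d : ℕ) : ℝ≥0∞) := by
  haveI : NeZero t := ⟨ht.ne'⟩
  have htR : (t : ℝ) ≠ 0 := Nat.cast_ne_zero.mpr ht.ne'
  set bad : Set (Fin d → ℝ) :=
    {x : Fin d → ℝ | ∃ b ∈ frontier P, ∃ l : Fin d → ℤ, x = b + cz l} with hbaddef
  have hbad : volume bad = 0 := bad_null hconv
  set ρ : (Fin d → Fin t) → (Fin d → ℤ) := fun r i => (r i : ℤ) with hρ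
  set badR : Set (Fin d → ℝ) :=
    ⋃ r : Fin d → Fin t, (fun x : Fin d → ℝ => (t : ℝ)⁻¹ • (x - cz (ρ r))) ⁻¹' bad with hbadR
  have hbadR0 : volume badR = 0 := by
    refine measure_iUnion_null fun r => ?_
    have hpre : (fun x : Fin d → ℝ => (t : ℝ)⁻¹ • (x - cz (ρ r))) ⁻¹' bad
        = (fun x => x + (-(cz (ρ r)))) ⁻¹' ((t : ℝ) • bad) := by
      ext z
      simp only [Set.mem_preimage, Set.mem_smul_set_iff_inv_smul_mem₀ htR, sub_eq_add_neg]
    rw [hpre, measure_preimage_add_right volume _ _, Measure.addHaar_smul, hbad, mul_zero]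
  rw [← MeasureTheory.compl_mem_ae_iff] at hbadR0
  filter_upwards [hbadR0] with x hx
  -- the reindexing equivalence
  set E : (Fin d → ℤ) ≃ (Fin d → Fin t) × (Fin d → ℤ) :=
    ((Equiv.piCongrRight fun _ : Fin d => Int.divModEquiv t).trans
      (Equiv.arrowProdEquivProdArrow (Fin d) (fun _ => ℤ) (fun _ => Fin t))).trans (Equiv.prodComm _ _) with hE
  have hEsymm : ∀ (r : Fin d → Fin t) (m : Fin d → ℤ),
      E.symm (r, m) = fun i => m i * t + (r i : ℤ) := by
    intro r m; rfl
  set f : (Fin d → ℤ) → ℝ≥0∞ :=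
    fun l => Set.indicator ((t : ℝ) • P) (1 : (Fin d → ℝ) → ℝ≥0∞) (x - cz l) with hf
  have h1 : ∑' l, f l = ∑' p : (Fin d → Fin t) × (Fin d → ℤ), f (E.symm p) :=
    (E.symm.tsum_eq f).symm
  have h2 : ∑' p : (Fin d → Fin t) × (Fin d → ℤ), f (E.symm p)
      = ∑' (r : Fin d → Fin t) (m : Fin d → ℤ), f (E.symm (r, m)) := by
    rw [← ENNReal.tsum_prod (f := fun r m => f (E.symm (r, m)))]
  have h3 : ∀ r : Fin d → Fin t, ∑' m : Fin d → ℤ, f (E.symm (r, m)) = k := by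
    intro r
    have hgood : ¬ ∃ b ∈ frontier P, ∃ l : Fin d → ℤ,
        (t : ℝ)⁻¹ • (x - cz (ρ r)) = b + cz l := by
      intro hcon
      apply hx
      exact Set.mem_iUnion.mpr ⟨r, hcon⟩
    have key := tileE hk htile ((t : ℝ)⁻¹ • (x - cz (ρ r))) hgood
    rw [← key]
    refine tsum_congr fun m => ?_
    rw [hEsymm]
    have hpt : x - cz (fun i => m i * t + (r i : ℤ)) ∈ (t : ℝ) • P
        ↔ ((t : ℝ)⁻¹ • (x - cz (ρ r))) - cz m ∈ P := by
      rw [Set.mem_smul_set_iff_inv_smul_mem₀ htR]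
      have : (t : ℝ)⁻¹ • (x - cz (fun i => m i * t + (r i : ℤ)))
          = ((t : ℝ)⁻¹ • (x - cz (ρ r))) - cz m := by
        funext i
        simp only [Pi.smul_apply, Pi.sub_apply, smul_eq_mul, cz, hρ]
        push_cast
        field_simp
        ring
      rw [this]
    by_cases hm : ((t : ℝ)⁻¹ • (x - cz (ρ r))) - cz m ∈ P
    · simp [hf, Set.indicator_apply, hpt.mpr hm, hm]
    · simp [hf, Set.indicator_apply, hm, (not_iff_not.mpr hpt).mpr hm]
  calc ∑' l, f l = ∑' (r : Fin d → Fin t) (m : Fin d → ℤ), f (E.symm (r, m)) := h1.trans h2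
    _ = ∑' _ : Fin d → Fin t, (k : ℝ≥0∞) := tsum_congr h3
    _ = ((k * t ^ d : ℕ) : ℝ≥0∞) := by
        rw [tsum_fintype]
        simp only [Finset.sum_const, Finset.card_univ, Fintype.card_fun, Fintype.card_fin,
          nsmul_eq_mul]
        push_cast
        ring

end

section
variable {d : ℕ}

lemma sum_ball_vol {Q : Set (Fin d → ℝ)} (hQ : MeasurableSet Q) {C : ℝ≥0∞}
    (hC : ∀ᵐ x : Fin d → ℝ,
      ∑' l : Fin d → ℤ, Set.indicator Q (1 : (Fin d → ℝ) → ℝ≥0∞) (x - cz l) = C)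
    (ε : ℝ) :
    ∑' n : Fin d → ℤ, volume (eball (cz n) ε ∩ Q)
      = C * volume (eball (0 : Fin d → ℝ) ε) := by
  have step1 : ∀ n : Fin d → ℤ, volume (eball (cz n) ε ∩ Q)
      = ∫⁻ y, Set.indicator (eball (0 : Fin d → ℝ) ε) (1 : (Fin d → ℝ) → ℝ≥0∞) y
          * Set.indicator Q (1 : (Fin d → ℝ) → ℝ≥0∞) (y + cz n) := by
    intro n
    rw [← lintegral_indicator_one ((eball_meas (cz n) ε).inter hQ)]
    have e1 : ∫⁻ x, Set.indicator (eball (cz n) ε ∩ Q) (1 : (Fin d → ℝ) → ℝ≥0∞) x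
        = ∫⁻ x, Set.indicator (eball (cz n) ε) (1 : (Fin d → ℝ) → ℝ≥0∞) x
            * Set.indicator Q (1 : (Fin d → ℝ) → ℝ≥0∞) x := by
      refine lintegral_congr fun x => ?_
      by_cases h1 : x ∈ eball (cz n) ε <;> by_cases h2 : x ∈ Q <;>
        simp [Set.indicator_apply, h1, h2]
    rw [e1]
    rw [← lintegral_add_right_eq_self
      (fun x => Set.indicator (eball (cz n) ε) (1 : (Fin d → ℝ) → ℝ≥0∞) x
        * Set.indicator Q (1 : (Fin d → ℝ) → ℝ≥0∞) x) (cz n)]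
    refine lintegral_congr fun y => ?_
    have hmem : y + cz n ∈ eball (cz n) ε ↔ y ∈ eball (0 : Fin d → ℝ) ε := mem_eball_add _ _ _
    by_cases h1 : y ∈ eball (0 : Fin d → ℝ) ε
    · simp [Set.indicator_apply, h1, hmem.mpr h1]
    · have h2 : y + cz n ∉ eball (cz n) ε := fun h => h1 (hmem.mp h)
      simp [Set.indicator_apply, h1, h2]
  have hmeasn : ∀ n : Fin d → ℤ, Measurable fun y : Fin d → ℝ =>
      Set.indicator (eball (0 : Fin d → ℝ) ε) (1 : (Fin d → ℝ) → ℝ≥0∞) y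
        * Set.indicator Q (1 : (Fin d → ℝ) → ℝ≥0∞) (y + cz n) := by
    intro n
    refine Measurable.mul ?_ ?_
    · exact measurable_one.indicator (eball_meas _ _)
    · exact (measurable_one.indicator hQ).comp (measurable_id.add_const (cz n))
  calc ∑' n : Fin d → ℤ, volume (eball (cz n) ε ∩ Q)
      = ∑' n : Fin d → ℤ, ∫⁻ y,
          Set.indicator (eball (0 : Fin d → ℝ) ε) (1 : (Fin d → ℝ) → ℝ≥0∞) y
            * Set.indicator Q (1 : (Fin d → ℝ) → ℝ≥0∞) (y + cz n) := tsum_congr step1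
    _ = ∫⁻ y, ∑' n : Fin d → ℤ,
          Set.indicator (eball (0 : Fin d → ℝ) ε) (1 : (Fin d → ℝ) → ℝ≥0∞) y
            * Set.indicator Q (1 : (Fin d → ℝ) → ℝ≥0∞) (y + cz n) :=
        (lintegral_tsum fun n => (hmeasn n).aemeasurable).symm
    _ = ∫⁻ y, Set.indicator (eball (0 : Fin d → ℝ) ε) (1 : (Fin d → ℝ) → ℝ≥0∞) y
          * ∑' n : Fin d → ℤ, Set.indicator Q (1 : (Fin d → ℝ) → ℝ≥0∞) (y + cz n) := by
        refine lintegral_congr fun y => ?_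
        exact ENNReal.tsum_mul_left
    _ = ∫⁻ y, Set.indicator (eball (0 : Fin d → ℝ) ε) (1 : (Fin d → ℝ) → ℝ≥0∞) y * C := by
        refine lintegral_congr_ae ?_
        filter_upwards [hC] with y hy
        congr 1
        rw [← hy]
        have := Equiv.tsum_eq (Equiv.neg (Fin d → ℤ))
          (fun n => Set.indicator Q (1 : (Fin d → ℝ) → ℝ≥0∞) (y - cz n))
        rw [← this]
        refine tsum_congr fun n => ?_
        simp [cz_neg, sub_eq_add_neg]
    _ = C * volume (eball (0 : Fin d → ℝ) ε) := by
        rw [lintegral_mul_const C (measurable_one.indicator (eball_meas _ _)),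
          lintegral_indicator_one (eball_meas _ _), mul_comm]

lemma vol_eq {k : ℕ} (hk : 0 < k) {P : Set (Fin d → ℝ)}
    (htile : ∀ x : Fin d → ℝ,
      (¬ ∃ b ∈ frontier P, ∃ l : Fin d → ℤ, x = b + fun i => (l i : ℝ)) →
      ∑' l : Fin d → ℤ, Set.indicator P (fun _ => (1 : ℝ)) (x - fun i => (l i : ℝ)) = k)
    (hconv : Convex ℝ P) (hmeas : MeasurableSet P) :
    volume P = k := by
  set B0 : Set (Fin d → ℝ) := Set.univ.pi fun _ : Fin d => Set.Ico (0 : ℝ) 1 with hB0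
  have hB0meas : MeasurableSet B0 := MeasurableSet.univ_pi fun i => measurableSet_Ico
  have hB0vol : volume B0 = 1 := by
    rw [hB0, volume_pi_pi]
    simp [Real.volume_Ico]
  -- the common double integral
  have hmeasl : ∀ l : Fin d → ℤ, Measurable fun x : Fin d → ℝ =>
      Set.indicator B0 (1 : (Fin d → ℝ) → ℝ≥0∞) x
        * Set.indicator P (1 : (Fin d → ℝ) → ℝ≥0∞) (x - cz l) := by
    intro l
    refine Measurable.mul (measurable_one.indicator hB0meas) ?_
    have hco : (fun x : Fin d → ℝ => Set.indicator P (1 : (Fin d → ℝ) → ℝ≥0∞) (x - cz l))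
        = (Set.indicator P (1 : (Fin d → ℝ) → ℝ≥0∞)) ∘ (fun x => x + (-(cz l))) := by
      funext x; simp [sub_eq_add_neg]
    rw [hco]
    exact (measurable_one.indicator hmeas).comp (measurable_id.add_const (-(cz l)))
  have hbad : volume {x : Fin d → ℝ | ∃ b ∈ frontier P, ∃ l : Fin d → ℤ, x = b + cz l} = 0 :=
    bad_null hconv
  rw [← MeasureTheory.compl_mem_ae_iff] at hbad
  have key1 : ∫⁻ x, Set.indicator B0 (1 : (Fin d → ℝ) → ℝ≥0∞) x
      * (∑' l : Fin d → ℤ, Set.indicator P (1 : (Fin d → ℝ) → ℝ≥0∞) (x - cz l)) = k := by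
    have : ∫⁻ x, Set.indicator B0 (1 : (Fin d → ℝ) → ℝ≥0∞) x
        * (∑' l : Fin d → ℤ, Set.indicator P (1 : (Fin d → ℝ) → ℝ≥0∞) (x - cz l))
        = ∫⁻ x, Set.indicator B0 (1 : (Fin d → ℝ) → ℝ≥0∞) x * (k : ℝ≥0∞) := by
      refine lintegral_congr_ae ?_
      filter_upwards [hbad] with x hx
      rw [tileE hk htile x hx]
    rw [this, lintegral_mul_const _ (measurable_one.indicator hB0meas),
      lintegral_indicator_one hB0meas, hB0vol, one_mul]
  have hunit : ∀ y : Fin d → ℝ,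
      ∑' l : Fin d → ℤ, Set.indicator B0 (1 : (Fin d → ℝ) → ℝ≥0∞) (y + cz l) = 1 := by
    intro y
    set l0 : Fin d → ℤ := fun i => -⌊y i⌋ with hl0
    have hmem : y + cz l0 ∈ B0 := by
      intro i _
      have : y i + ((-⌊y i⌋ : ℤ) : ℝ) = Int.fract (y i) := by
        push_cast
        rw [← Int.self_sub_floor]
        ring
      simp only [Pi.add_apply, cz, hl0, this]
      exact ⟨Int.fract_nonneg _, Int.fract_lt_one _⟩
    rw [tsum_eq_single l0]
    · simp [Set.indicator_apply, hmem]
    · intro l hl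
      have : y + cz l ∉ B0 := by
        intro hmem'
        apply hl
        funext i
        have hi := hmem' i (Set.mem_univ i)
        simp only [Pi.add_apply, cz] at hi
        have : ⌊y i + (l i : ℝ)⌋ = 0 := Int.floor_eq_zero_iff.mpr hi
        rw [Int.floor_add_intCast] at this
        simp [hl0]
        omega
      simp [Set.indicator_apply, this]
  have key2 : ∫⁻ x, Set.indicator B0 (1 : (Fin d → ℝ) → ℝ≥0∞) x
      * (∑' l : Fin d → ℤ, Set.indicator P (1 : (Fin d → ℝ) → ℝ≥0∞) (x - cz l)) = volume P := by
    calc ∫⁻ x, Set.indicator B0 (1 : (Fin d → ℝ) → ℝ≥0∞) x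
        * (∑' l : Fin d → ℤ, Set.indicator P (1 : (Fin d → ℝ) → ℝ≥0∞) (x - cz l))
        = ∫⁻ x, ∑' l : Fin d → ℤ, Set.indicator B0 (1 : (Fin d → ℝ) → ℝ≥0∞) x
            * Set.indicator P (1 : (Fin d → ℝ) → ℝ≥0∞) (x - cz l) := by
          refine lintegral_congr fun x => ?_
          exact ENNReal.tsum_mul_left.symm
      _ = ∑' l : Fin d → ℤ, ∫⁻ x, Set.indicator B0 (1 : (Fin d → ℝ) → ℝ≥0∞) x
            * Set.indicator P (1 : (Fin d → ℝ) → ℝ≥0∞) (x - cz l) :=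
          lintegral_tsum fun l => (hmeasl l).aemeasurable
      _ = ∑' l : Fin d → ℤ, ∫⁻ y, Set.indicator B0 (1 : (Fin d → ℝ) → ℝ≥0∞) (y + cz l)
            * Set.indicator P (1 : (Fin d → ℝ) → ℝ≥0∞) y := by
          refine tsum_congr fun l => ?_
          rw [← lintegral_add_right_eq_self
            (fun x => Set.indicator B0 (1 : (Fin d → ℝ) → ℝ≥0∞) x
              * Set.indicator P (1 : (Fin d → ℝ) → ℝ≥0∞) (x - cz l)) (cz l)]
          refine lintegral_congr fun y => ?_
          simp only [add_sub_cancel_right]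
      _ = ∫⁻ y, ∑' l : Fin d → ℤ, Set.indicator B0 (1 : (Fin d → ℝ) → ℝ≥0∞) (y + cz l)
            * Set.indicator P (1 : (Fin d → ℝ) → ℝ≥0∞) y := by
          refine (lintegral_tsum fun l => ?_).symm
          refine Measurable.aemeasurable (Measurable.mul ?_ (measurable_one.indicator hmeas))
          have hco : (fun y : Fin d → ℝ => Set.indicator B0 (1 : (Fin d → ℝ) → ℝ≥0∞) (y + cz l))
              = (Set.indicator B0 (1 : (Fin d → ℝ) → ℝ≥0∞)) ∘ (fun y => y + cz l) := rfl
          rw [hco]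
          exact (measurable_one.indicator hB0meas).comp (measurable_id.add_const (cz l))
      _ = ∫⁻ y, Set.indicator P (1 : (Fin d → ℝ) → ℝ≥0∞) y := by
          refine lintegral_congr fun y => ?_
          rw [ENNReal.tsum_mul_right, hunit y, one_mul]
      _ = volume P := lintegral_indicator_one hmeas
  rw [← key2, key1]

end

end CMAux

open CMAux

/-- If a polytope `P ⊆ ℝ^d` `k`-tiles `ℝ^d` by integer translations, then `P` is a concrete
polytope: its solid angle sum satisfies `A_P(t) = vol(P)·t^d` for every positive integer `t`. -/
theorem concrete_of_multitiling (d k : ℕ) (hk : 0 < k)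
    (V : Finset (Fin d → ℝ)) (P : Set (Fin d → ℝ))
    (hP : P = convexHull ℝ (V : Set (Fin d → ℝ)))
    (htile : ∀ x : Fin d → ℝ,
      (¬ ∃ b ∈ frontier P, ∃ l : Fin d → ℤ, x = b + fun i => (l i : ℝ)) →
      ∑' l : Fin d → ℤ, Set.indicator P (fun _ => (1 : ℝ)) (x - fun i => (l i : ℝ)) = k) :
    ∀ t : ℕ, 0 < t → ∀ ω : (Fin d → ℤ) → ℝ,
      (∀ n : Fin d → ℤ, saTendsto ((t : ℝ) • P) (fun i => (n i : ℝ)) (ω n)) →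
      ∑' n : Fin d → ℤ, ω n = (volume P).toReal * (t : ℝ) ^ d := by
  intro t ht ω hω
  have hconv : Convex ℝ P := hP ▸ convex_convexHull ℝ _
  have hcomp : IsCompact P := hP ▸ V.finite_toSet.isCompact_convexHull ℝ
  set Q : Set (Fin d → ℝ) := (t : ℝ) • P with hQdef
  have hQcomp : IsCompact Q := hcomp.smul _
  have hQmeas : MeasurableSet Q := hQcomp.isClosed.measurableSet
  set C : ℝ≥0∞ := ((k * t ^ d : ℕ) : ℝ≥0∞) with hCdef
  have hae := tileE_smul hk ht htile hconv
  have hkey : ∀ ε : ℝ, ∑' n : Fin d → ℤ, volume (eball (cz n) ε ∩ Q)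
      = C * volume (eball (0 : Fin d → ℝ) ε) := fun ε => sum_ball_vol hQmeas hae ε
  obtain ⟨r, hr⟩ := hQcomp.isBounded.subset_closedBall 0
  set M : ℤ := ⌈r⌉ + 1 with hM
  have hMr : r + 1 ≤ (M : ℝ) := by
    have := Int.le_ceil r
    push_cast [hM]
    linarith
  set S : Finset (Fin d → ℤ) := Fintype.piFinset fun _ : Fin d => Finset.Icc (-M) M with hS
  have hempty : ∀ n ∉ S, ∀ ε ∈ Set.Ioo (0 : ℝ) 1, eball (cz n) ε ∩ Q = ∅ := by
    intro n hn ε hε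
    rw [Set.eq_empty_iff_forall_notMem]
    rintro y ⟨hy1, hy2⟩
    rw [hS, Fintype.mem_piFinset] at hn
    push_neg at hn
    obtain ⟨i, hi⟩ := hn
    rw [Finset.mem_Icc] at hi
    have hint : M + 1 ≤ n i ∨ n i ≤ -(M + 1) := by omega
    have h1 : (y i - (n i : ℝ)) ^ 2 < ε ^ 2 := by
      refine lt_of_le_of_lt ?_ hy1
      exact Finset.single_le_sum (f := fun j => (y j - cz n j) ^ 2)
        (fun j _ => sq_nonneg _) (Finset.mem_univ i)
    have habs : |y i - (n i : ℝ)| < 1 := by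
      nlinarith [abs_nonneg (y i - (n i : ℝ)), sq_abs (y i - (n i : ℝ)), hε.1, hε.2]
    have hyr : |y i| ≤ r := by
      have hd : dist y 0 ≤ r := Metric.mem_closedBall.mp (hr hy2)
      have := dist_le_pi_dist y 0 i
      simp only [Pi.zero_apply, Real.dist_eq, sub_zero] at this
      linarith
    have hnr : |(n i : ℝ)| < r + 1 := by
      have := abs_add_le ((n i : ℝ) - y i) (y i)
      rw [sub_add_cancel] at this
      rw [abs_sub_comm] at habs
      linarith
    have hge : (M : ℝ) + 1 ≤ |(n i : ℝ)| := by
      rcases hint with h | h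
      · have h' : (M : ℝ) + 1 ≤ (n i : ℝ) := by exact_mod_cast h
        exact h'.trans (le_abs_self _)
      · have h' : (n i : ℝ) ≤ -((M : ℝ) + 1) := by exact_mod_cast h
        have h'' := neg_le_abs ((n i : ℝ))
        linarith
    linarith
  have hzero : ∀ n ∉ S, ω n = 0 := by
    intro n hn
    have h2 : Filter.Tendsto
        (fun ε : ℝ => (volume (eball (cz n) ε ∩ Q)).toReal / (volume (eball (cz n) ε)).toReal)
        (nhdsWithin 0 (Set.Ioi 0)) (nhds (ω n)) := hω n
    have h1 : ∀ᶠ ε in nhdsWithin (0 : ℝ) (Set.Ioi 0),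
        (volume (eball (cz n) ε ∩ Q)).toReal / (volume (eball (cz n) ε)).toReal = 0 := by
      filter_upwards [Ioo_mem_nhdsGT_of_mem (Set.mem_Ico.mpr ⟨le_refl (0:ℝ), one_pos⟩)] with ε hε
      rw [hempty n hn ε hε]
      simp
    have h3 : Filter.Tendsto (fun _ : ℝ => (0 : ℝ))
        (nhdsWithin 0 (Set.Ioi 0)) (nhds (ω n)) := Filter.Tendsto.congr' h1 h2
    exact (tendsto_nhds_unique h3 tendsto_const_nhds)
  have htsum : ∑' n : Fin d → ℤ, ω n = ∑ n ∈ S, ω n := tsum_eq_sum hzero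
  have hconst : ∀ᶠ ε in nhdsWithin (0 : ℝ) (Set.Ioi 0),
      ∑ n ∈ S, (volume (eball (cz n) ε ∩ Q)).toReal / (volume (eball (cz n) ε)).toReal
        = C.toReal := by
    filter_upwards [Ioo_mem_nhdsGT_of_mem (Set.mem_Ico.mpr ⟨le_refl (0:ℝ), one_pos⟩)] with ε hε
    have hv0 : volume (eball (0 : Fin d → ℝ) ε) ≠ 0 := (volume_eball_pos hε.1 _).ne'
    have hvt : volume (eball (0 : Fin d → ℝ) ε) ≠ ⊤ := (volume_eball_lt_top hε.1 _).ne
    have hterm : ∀ n ∈ S, volume (eball (cz n) ε ∩ Q) ≠ ⊤ := by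
      intro n _
      refine ne_top_of_le_ne_top ?_ (measure_mono Set.inter_subset_left)
      rw [volume_eball_eq]
      exact hvt
    calc ∑ n ∈ S, (volume (eball (cz n) ε ∩ Q)).toReal / (volume (eball (cz n) ε)).toReal
        = (∑ n ∈ S, volume (eball (cz n) ε ∩ Q)).toReal
            / (volume (eball (0 : Fin d → ℝ) ε)).toReal := by
          rw [ENNReal.toReal_sum hterm, Finset.sum_div]
          refine Finset.sum_congr rfl fun n _ => ?_
          rw [volume_eball_eq]
      _ = (C * volume (eball (0 : Fin d → ℝ) ε)).toReal
            / (volume (eball (0 : Fin d → ℝ) ε)).toReal := by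
          rw [← hkey ε, tsum_eq_sum (s := S) ?_]
          intro n hn
          rw [hempty n hn ε hε]
          simp
      _ = C.toReal := by
          rw [ENNReal.toReal_mul, mul_div_assoc, div_self, mul_one]
          exact ENNReal.toReal_ne_zero.mpr ⟨hv0, hvt⟩
  have hT1 : Filter.Tendsto
      (fun ε : ℝ => ∑ n ∈ S,
        (volume (eball (cz n) ε ∩ Q)).toReal / (volume (eball (cz n) ε)).toReal)
      (nhdsWithin 0 (Set.Ioi 0)) (nhds (∑ n ∈ S, ω n)) :=
    tendsto_finset_sum S fun n _ => hω n
  have hT2 : Filter.Tendsto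
      (fun ε : ℝ => ∑ n ∈ S,
        (volume (eball (cz n) ε ∩ Q)).toReal / (volume (eball (cz n) ε)).toReal)
      (nhdsWithin 0 (Set.Ioi 0)) (nhds C.toReal) :=
    Filter.Tendsto.congr' (hconst.mono fun ε h => h.symm) tendsto_const_nhds
  have hsum_eq : ∑ n ∈ S, ω n = C.toReal := tendsto_nhds_unique hT1 hT2
  rw [htsum, hsum_eq, vol_eq hk htile hconv hcomp.isClosed.measurableSet, hCdef]
  simp
end
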